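/- If the continued fraction of √(n²+j) (with n a positive integer, 1 ≤ j ≤ 2n) has period of length 3, then it equals [n; x, x, 2n repeated] for some positive integer x, x is even, j is odd, and j = (2xn+1)/(x²+1). -/

import Mathlib

/-- The sequence of complete quotients of the continued fraction algorithm. -/
noncomputable def cfX (x : ℝ) : ℕ → ℝ
  | 0 => x
  | n + 1 =>
    if cfX x n - ⌊cfX x n⌋ = 0 then 0 else 1 / (cfX x n - ⌊cfX x n⌋)

/-- The partial quotients (continued fraction expansion) of a real number. -/
noncomputable def cfA (x : ℝ) (n : ℕ) : ℤ := ⌊cfX x n⌋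

/-!
Two irrationals with the same partial quotients are equal: writing `uₘ, vₘ` for their complete
quotients, `|uₘ - vₘ|` stays below `1` but grows at least fourfold every two steps. Hence period 3
of the quotients of `y = √(n²+j)` makes its complete quotients purely periodic from index 1, and
with `t = y - n` the relation `1/t = [a₁; a₂, a₃ + t]` together with `t² = j - 2nt` becomes a
linear equation in `t` over `ℤ`. As `t` is irrational both coefficients vanish:
`(a₁a₂ + 1)(a₃ - 2n) = a₂ - a₁` and `a₂a₃ + 1 = (a₁a₂ + 1)j`. Since `|a₂ - a₁| < a₁a₂ + 1`, the
first gives `a₂ = a₁` and `a₃ = 2n`; the second then reads `(x² + 1)j = 2xn + 1`, and the right side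
is odd.
-/

lemma nonpos_of_forall_le_of_mul_le_succ {d : ℕ → ℝ} {c B : ℝ} (hc : 1 < c) (hB : ∀ m, d m ≤ B)
    (hd : ∀ m, c * d m ≤ d (m + 1)) : d 0 ≤ 0 := by
  have hpow : ∀ M, c ^ M * d 0 ≤ d M := by
    intro M
    induction M with
    | zero => simp
    | succ M ih =>
      calc c ^ (M + 1) * d 0 = c * (c ^ M * d 0) := by ring
        _ ≤ c * d M := by gcongr
        _ ≤ d (M + 1) := hd M
  by_contra! hpos
  obtain ⟨M, hM⟩ := pow_unbounded_of_one_lt (B / d 0) hc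
  rw [div_lt_iff₀ hpos] at hM
  linarith [hpow M, hB M]

section ContinuedFraction

variable {x u v : ℝ}

lemma cfX_cfX (x : ℝ) (k m : ℕ) : cfX (cfX x k) m = cfX x (k + m) := by
  induction m with
  | zero => rfl
  | succ m ih => rw [← Nat.add_assoc, cfX, cfX, ih]

lemma cfA_cfX (x : ℝ) (k m : ℕ) : cfA (cfX x k) m = cfA x (k + m) := by
  rw [cfA, cfA, cfX_cfX]

lemma cfX_succ_eq_inv_fract {m : ℕ} (hx : Irrational (cfX x m)) :
    cfX x (m + 1) = (Int.fract (cfX x m))⁻¹ := by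
  have hfract : cfX x m - ⌊cfX x m⌋ ≠ 0 := (hx.sub_intCast _).ne_zero
  rw [cfX, if_neg hfract, one_div, Int.fract]

lemma irrational_cfX (hx : Irrational x) (m : ℕ) : Irrational (cfX x m) := by
  induction m with
  | zero => exact hx
  | succ m ih => rw [cfX_succ_eq_inv_fract ih, Int.fract]; exact (ih.sub_intCast _).inv

lemma one_lt_cfX_succ (hx : Irrational x) (m : ℕ) : 1 < cfX x (m + 1) := by
  have hm := irrational_cfX hx m
  have hpos : 0 < Int.fract (cfX x m) :=
    (Int.fract_nonneg _).lt_of_ne' (by rw [Int.fract]; exact (hm.sub_intCast _).ne_zero)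
  rw [cfX_succ_eq_inv_fract hm]
  exact one_lt_inv_iff₀.2 ⟨hpos, Int.fract_lt_one _⟩

lemma cfX_eq_cfA_add_inv (hx : Irrational x) (m : ℕ) :
    cfX x m = cfA x m + (cfX x (m + 1))⁻¹ := by
  rw [cfX_succ_eq_inv_fract (irrational_cfX hx m), inv_inv, cfA, Int.floor_add_fract]

lemma one_le_cfA_succ (hx : Irrational x) (m : ℕ) : 1 ≤ cfA x (m + 1) :=
  Int.le_floor.2 (by exact_mod_cast (one_lt_cfX_succ hx m).le)

lemma two_lt_cfX_succ_mul_cfX_add_two (hx : Irrational x) (m : ℕ) :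
    2 < cfX x (m + 1) * cfX x (m + 2) := by
  have hA : (1 : ℝ) ≤ cfA x (m + 1) := by exact_mod_cast one_le_cfA_succ hx m
  have hnext := one_lt_cfX_succ hx (m + 1)
  rw [cfX_eq_cfA_add_inv hx (m + 1), add_mul, inv_mul_cancel₀ (by positivity)]
  nlinarith

lemma abs_cfX_sub_cfX_mul (hu : Irrational u) (hv : Irrational v) (h : ∀ m, cfA u m = cfA v m)
    (m : ℕ) : |cfX u m - cfX v m| * (cfX u (m + 1) * cfX v (m + 1)) =
      |cfX u (m + 1) - cfX v (m + 1)| := by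
  have hu1 := one_lt_cfX_succ hu m
  have hv1 := one_lt_cfX_succ hv m
  rw [cfX_eq_cfA_add_inv hu m, cfX_eq_cfA_add_inv hv m, h m, add_sub_add_left_eq_sub,
    ← abs_of_pos (by positivity : 0 < cfX u (m + 1) * cfX v (m + 1)), ← abs_mul, abs_sub_comm]
  congr 1
  field_simp

lemma eq_of_forall_cfA_eq (hu : Irrational u) (hv : Irrational v) (h : ∀ m, cfA u m = cfA v m) :
    u = v := by
  have hgrowth : ∀ m, 4 * |cfX u (2 * m) - cfX v (2 * m)| ≤
      |cfX u (2 * m + 2) - cfX v (2 * m + 2)| := by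
    intro m
    rw [← abs_cfX_sub_cfX_mul hu hv h (2 * m + 1), ← abs_cfX_sub_cfX_mul hu hv h (2 * m)]
    have hu2 := two_lt_cfX_succ_mul_cfX_add_two hu (2 * m)
    have hv2 := two_lt_cfX_succ_mul_cfX_add_two hv (2 * m)
    calc 4 * |cfX u (2 * m) - cfX v (2 * m)|
        ≤ |cfX u (2 * m) - cfX v (2 * m)| * ((cfX u (2 * m + 1) * cfX u (2 * m + 2)) *
            (cfX v (2 * m + 1) * cfX v (2 * m + 2))) := by
          rw [mul_comm]; gcongr; nlinarith
      _ = _ := by ring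
  have := nonpos_of_forall_le_of_mul_le_succ (d := fun m => |cfX u (2 * m) - cfX v (2 * m)|)
    (by norm_num : (1 : ℝ) < 4) (fun m => (Int.abs_sub_lt_one_of_floor_eq_floor (h _)).le) hgrowth
  simpa [cfX, sub_eq_zero] using this

lemma cfX_add_eq_of_cfA_add_eq (hx : Irrational x) {k p : ℕ}
    (h : ∀ m, k ≤ m → cfA x (m + p) = cfA x m) : cfX x (k + p) = cfX x k := by
  have := eq_of_forall_cfA_eq (irrational_cfX hx (k + p)) (irrational_cfX hx k) fun m => by
    rw [cfA_cfX, cfA_cfX, add_right_comm, h _ (Nat.le_add_right k m)]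
  simpa only [cfX] using this

lemma period_three_equation (hx : Irrational x) (h41 : cfX x 4 = cfX x 1) :
    (cfA x 2 * (cfA x 3 + (x - cfA x 0)) + 1) * (1 - cfA x 1 * (x - cfA x 0)) =
      (x - cfA x 0) * (cfA x 3 + (x - cfA x 0)) := by
  have h0 : x - cfA x 0 = (cfX x 1)⁻¹ := sub_eq_of_eq_add' (cfX_eq_cfA_add_inv hx 0)
  have h1 : cfX x 1 = cfA x 1 + (cfX x 2)⁻¹ := cfX_eq_cfA_add_inv hx 1
  have h2 : cfX x 2 = cfA x 2 + (cfX x 3)⁻¹ := cfX_eq_cfA_add_inv hx 2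
  have h3 : cfX x 3 = cfA x 3 + (cfX x 1)⁻¹ := by rw [← h41]; exact cfX_eq_cfA_add_inv hx 3
  have hg1 : cfX x 1 ≠ 0 := (zero_lt_one.trans (one_lt_cfX_succ hx 0)).ne'
  have hg2 : cfX x 2 ≠ 0 := (zero_lt_one.trans (one_lt_cfX_succ hx 1)).ne'
  have hg3 : cfX x 3 ≠ 0 := (zero_lt_one.trans (one_lt_cfX_succ hx 2)).ne'
  rw [h0, ← h3]
  field_simp at h1 h2 ⊢
  linear_combination cfX x 3 * h1 - (cfX x 1 - cfA x 1) * h2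

end ContinuedFraction

lemma period_three_relations {t : ℝ} (ht : Irrational t) {n j A B C : ℤ}
    (hsq : t ^ 2 + 2 * n * t = j) (hcf : (B * (C + t) + 1) * (1 - A * t) = t * (C + t)) :
    (A * B + 1) * (C - 2 * n) = B - A ∧ B * C + 1 = (A * B + 1) * j := by
  have hlin : ((B * C + 1 - (A * B + 1) * j : ℤ) : ℝ) +
      ((B - A - (A * B + 1) * (C - 2 * n) : ℤ) : ℝ) * t = 0 := by
    push_cast
    linear_combination hcf + (A * B + 1) * hsq
  have hcoeff : B - A - (A * B + 1) * (C - 2 * n) = 0 := by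
    by_contra hne
    exact ((ht.intCast_mul hne).intCast_add _).ne_zero hlin
  rw [hcoeff, Int.cast_zero, zero_mul, add_zero, Int.cast_eq_zero] at hlin
  exact ⟨by linear_combination -hcoeff, by linear_combination hlin⟩

lemma eq_and_eq_zero_of_mul_eq_sub {A B k : ℤ} (hA : 0 < A) (hB : 0 < B)
    (h : (A * B + 1) * k = B - A) : B = A ∧ k = 0 := by
  have hlt : |B - A| < A * B + 1 := abs_sub_lt_iff.2 ⟨by nlinarith, by nlinarith⟩
  have hBA : B - A = 0 := Int.eq_zero_of_abs_lt_dvd ⟨k, h.symm⟩ hlt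
  refine ⟨by linarith, ?_⟩
  rw [hBA] at h
  exact (mul_eq_zero.1 h).resolve_left (by positivity)

lemma even_and_odd_of_sq_add_one_mul_eq {A j n : ℤ} (h : (A ^ 2 + 1) * j = 2 * A * n + 1) :
    Even A ∧ Odd j := by
  have hodd : Odd ((A ^ 2 + 1) * j) := h ▸ ⟨A * n, by ring⟩
  obtain ⟨hA, hj⟩ := Int.odd_mul.1 hodd
  exact ⟨by simpa [parity_simps] using hA, hj⟩

lemma irrational_sqrt_sq_add {n j : ℕ} (hj1 : 1 ≤ j) (hj2 : j ≤ 2 * n) :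
    Irrational √((n : ℝ) ^ 2 + j) := by
  rw [show (n : ℝ) ^ 2 + j = ((n ^ 2 + j : ℕ) : ℝ) by push_cast; ring, irrational_sqrt_natCast_iff]
  rintro ⟨t, ht⟩
  exact Nat.not_exists_sq' (m := n) (n := n ^ 2 + j) (by omega) (by nlinarith) ⟨t, by rw [ht, sq]⟩

lemma floor_sqrt_sq_add {n j : ℕ} (hj : j ≤ 2 * n) : ⌊√((n : ℝ) ^ 2 + j)⌋ = n := by
  rw [show (n : ℝ) ^ 2 + j = ((n ^ 2 + j : ℕ) : ℝ) by push_cast; ring,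
    Real.floor_real_sqrt_eq_nat_sqrt, Nat.sqrt_add_eq' n (by omega)]

theorem sqrt_period_three_general (n j : ℕ) (hj1 : 1 ≤ j) (hj2 : j ≤ 2 * n)
    (hper : sInf {p : ℕ | 0 < p ∧ ∀ m : ℕ, 1 ≤ m →
        cfA (Real.sqrt ((n : ℝ) ^ 2 + (j : ℝ))) (m + p) = cfA (Real.sqrt ((n : ℝ) ^ 2 + (j : ℝ))) m} = 3) :
    ∃ x : ℤ, 0 < x ∧ Even x ∧ Odd j ∧
      cfA (Real.sqrt ((n : ℝ) ^ 2 + (j : ℝ))) 0 = n ∧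
      (∀ k : ℕ, cfA (Real.sqrt ((n : ℝ) ^ 2 + (j : ℝ))) (3 * k + 1) = x ∧
        cfA (Real.sqrt ((n : ℝ) ^ 2 + (j : ℝ))) (3 * k + 2) = x ∧
        cfA (Real.sqrt ((n : ℝ) ^ 2 + (j : ℝ))) (3 * k + 3) = 2 * n) ∧
      (j : ℚ) = (2 * (x : ℚ) * (n : ℚ) + 1) / ((x : ℚ) ^ 2 + 1) := by
  set y := Real.sqrt ((n : ℝ) ^ 2 + (j : ℝ))
  have hy : Irrational y := irrational_sqrt_sq_add hj1 hj2
  have ha0 : cfA y 0 = n := floor_sqrt_sq_add hj2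
  have hper3 : ∀ m, 1 ≤ m → cfA y (m + 3) = cfA y m :=
    (hper ▸ Nat.sInf_mem (Nat.nonempty_of_pos_sInf (by omega))).2
  have hsq : (y - cfA y 0) ^ 2 + 2 * (n : ℤ) * (y - cfA y 0) = (j : ℤ) := by
    rw [ha0]
    push_cast
    linear_combination Real.sq_sqrt (by positivity : (0 : ℝ) ≤ n ^ 2 + j)
  obtain ⟨hBA, hCj⟩ := period_three_relations (hy.sub_intCast _) hsq
    (period_three_equation hy (cfX_add_eq_of_cfA_add_eq hy hper3))
  obtain ⟨hB, hC⟩ := eq_and_eq_zero_of_mul_eq_sub (one_le_cfA_succ hy 0) (one_le_cfA_succ hy 1) hBA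
  have hj : (cfA y 1 ^ 2 + 1) * j = 2 * cfA y 1 * n + 1 := by
    rw [hB] at hCj
    linear_combination -hCj + cfA y 1 * hC
  obtain ⟨hAeven, hjodd⟩ := even_and_odd_of_sq_add_one_mul_eq hj
  refine ⟨cfA y 1, one_le_cfA_succ hy 0, hAeven, Int.odd_coe_nat j |>.1 hjodd, ha0, fun k => ?_, ?_⟩
  · have hk (r : ℕ) : cfA y (3 * k + r + 1) = cfA y (r + 1) := by
      induction k with
      | zero => simp
      | succ k ih =>
        rw [show 3 * (k + 1) + r + 1 = 3 * k + r + 1 + 3 by ring, hper3 _ (by omega), ih]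
    exact ⟨hk 0, (hk 1).trans hB, (hk 2).trans (by linear_combination hC)⟩
  · rw [eq_div_iff (by positivity)]
    exact_mod_cast (by linear_combination hj : (j : ℤ) * (cfA y 1 ^ 2 + 1) = 2 * cfA y 1 * n + 1)

/-- If the continued fraction of `√(n²+j)` has period of length 3, then it is
`[n; x, x, 2n repeated]` with `x` even, `j` odd and `j = (2xn+1)/(x²+1)`. -/
theorem sqrt_period_three (n j : ℕ) (hn : 0 < n) (hj1 : 1 ≤ j) (hj2 : j ≤ 2 * n)
    (hper : sInf {p : ℕ | 0 < p ∧ ∀ m : ℕ, 1 ≤ m →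
        cfA (Real.sqrt ((n : ℝ) ^ 2 + (j : ℝ))) (m + p) = cfA (Real.sqrt ((n : ℝ) ^ 2 + (j : ℝ))) m} = 3) :
    ∃ x : ℤ, 0 < x ∧ Even x ∧ Odd j ∧
      cfA (Real.sqrt ((n : ℝ) ^ 2 + (j : ℝ))) 0 = n ∧
      (∀ k : ℕ, cfA (Real.sqrt ((n : ℝ) ^ 2 + (j : ℝ))) (3 * k + 1) = x ∧
        cfA (Real.sqrt ((n : ℝ) ^ 2 + (j : ℝ))) (3 * k + 2) = x ∧
        cfA (Real.sqrt ((n : ℝ) ^ 2 + (j : ℝ))) (3 * k + 3) = 2 * n) ∧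
      (j : ℚ) = (2 * (x : ℚ) * (n : ℚ) + 1) / ((x : ℚ) ^ 2 + 1) :=
  sqrt_period_three_general n j hj1 hj2 hper
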